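/- Let ∇ ⊂ ℝ⁴ be the Birkhoff-type polytope defined by x,y,z,w ≥ 0, x ≤ z+w ≤ 1, z ≤ x+y ≤ 1, y+w ≤ 1. For every positive integer n, the number of lattice points in n∇ equals C(n+4,4) + C(n+3,4) + C(n+2,4) = (3n⁴ + 18n³ + 45n² + 54n + 24)/24. -/

import Mathlib

/-!
The lattice points of `n∇` split into three classes according to whether `x ≤ z` or `z < x`
and whether `min x z + y + w ≤ n`. Each class is carried by a unimodular affine map onto the
lattice points of a dilated standard simplex `{a, b, c, d ≥ 0, a + b + c + d ≤ m}` with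
`m = n`, `n - 1`, `n - 2` respectively, and such a simplex has `C(m + 4, 4)` lattice points
by the hockey-stick identity. This is a half-open triangulation of `∇` into three unimodular
simplices, whence the `h*`-vector `(1, 1, 1)`.
-/

open Pointwise

def nabla : Set (ℝ × ℝ × ℝ × ℝ) :=
  {p : ℝ × ℝ × ℝ × ℝ |
    0 ≤ p.1 ∧
    0 ≤ p.2.1 ∧
    0 ≤ p.2.2.1 ∧
    0 ≤ p.2.2.2 ∧
    p.1 ≤ p.2.2.1 + p.2.2.2 ∧
    p.2.2.1 + p.2.2.2 ≤ 1 ∧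
    p.2.2.1 ≤ p.1 + p.2.1 ∧
    p.1 + p.2.1 ≤ 1 ∧
    p.2.1 + p.2.2.2 ≤ 1}

open Finset

theorem card_eq_card_filter_add_card_filter_add_card_filter {α : Type*} {s : Finset α}
    {p q r : α → Prop} [DecidablePred p] [DecidablePred q] [DecidablePred r]
    (hq : ∀ a ∈ s, q a → ¬ p a) (hr : ∀ a ∈ s, r a ↔ ¬ p a ∧ ¬ q a) :
    #s = #(s.filter p) + #(s.filter q) + #(s.filter r) := by
  rw [add_assoc, ← card_filter_add_card_filter_not p]
  congr 1
  rw [← card_filter_add_card_filter_not q, filter_filter, filter_filter]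
  congr 2
  · exact filter_congr fun a ha => ⟨And.right, fun h => ⟨hq a ha h, h⟩⟩
  · exact filter_congr fun a ha => (hr a ha).symm

def natSimplex (k m : ℕ) : Finset (Fin k → ℕ) :=
  (Fintype.piFinset fun _ => range (m + 1)).filter fun f => ∑ i, f i ≤ m

theorem mem_natSimplex {k m : ℕ} {f : Fin k → ℕ} :
    f ∈ natSimplex k m ↔ ∑ i, f i ≤ m := by
  simp only [natSimplex, mem_filter, Fintype.mem_piFinset, mem_range, and_iff_right_iff_imp]
  exact fun h i => Nat.lt_succ_of_le ((single_le_sum_of_canonicallyOrdered (mem_univ i)).trans h)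

theorem card_natSimplex_filter_apply_zero_eq {k m a : ℕ} (ha : a ≤ m) :
    #((natSimplex (k + 1) m).filter fun f => f 0 = a) = #(natSimplex k (m - a)) := by
  refine card_nbij' Fin.tail (fun g => Fin.cons a g) ?_ ?_ ?_ ?_
  · intro f hf
    simp only [mem_coe, mem_filter, mem_natSimplex, Fin.sum_univ_succ] at hf
    simp only [mem_coe, mem_natSimplex, Fin.tail]
    omega
  · intro f hf
    simp only [mem_coe, mem_natSimplex] at hf
    simp only [mem_coe, mem_filter, mem_natSimplex, Fin.sum_univ_succ, Fin.cons_zero,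
      Fin.cons_succ, and_true]
    omega
  · intro f hf
    rw [← (mem_filter.1 hf).2]
    exact Fin.cons_self_tail f
  · intro f _
    exact Fin.tail_cons _ _

theorem card_natSimplex (k m : ℕ) : #(natSimplex k m) = (m + k).choose k := by
  induction k generalizing m with
  | zero => simp [natSimplex]
  | succ k ih =>
    rw [card_eq_sum_card_fiberwise (f := fun f => f 0) (t := range (m + 1))]
    · calc ∑ a ∈ range (m + 1), #((natSimplex (k + 1) m).filter fun f => f 0 = a)
          = ∑ a ∈ range (m + 1), (m - a + k).choose k :=
            sum_congr rfl fun a ha => by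
              rw [card_natSimplex_filter_apply_zero_eq (mem_range_succ_iff.1 ha), ih]
        _ = ∑ j ∈ range (m + 1), (j + k).choose k :=
            sum_range_reflect (fun j => (j + k).choose k) (m + 1)
        _ = (m + (k + 1)).choose (k + 1) := by
            rw [Nat.sum_range_add_choose, add_assoc]
    · intro f hf
      rw [mem_coe, mem_natSimplex] at hf
      rw [mem_coe, mem_range, Nat.lt_succ_iff]
      exact (single_le_sum_of_canonicallyOrdered (mem_univ 0)).trans hf

noncomputable def simplex4 (m : ℤ) : Finset (ℤ × ℤ × ℤ × ℤ) :=
  (Icc 0 m ×ˢ Icc 0 m ×ˢ Icc 0 m ×ˢ Icc 0 m).filter fun (a, b, c, d) => a + b + c + d ≤ m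

theorem mem_simplex4 {m a b c d : ℤ} :
    (a, b, c, d) ∈ simplex4 m ↔ 0 ≤ a ∧ 0 ≤ b ∧ 0 ≤ c ∧ 0 ≤ d ∧ a + b + c + d ≤ m := by
  simp only [simplex4, mem_filter, mem_product, mem_Icc]
  omega

-- Also covers `m < 0`, where the simplex is empty and `k < 4`.
theorem card_simplex4 {m : ℤ} {k : ℕ} (hk : m + 4 = k) : #(simplex4 m) = k.choose 4 := by
  by_cases hm : m < 0
  · rw [Nat.choose_eq_zero_of_lt (by omega), card_eq_zero, eq_empty_iff_forall_notMem]
    rintro ⟨a, b, c, d⟩ h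
    rw [mem_simplex4] at h
    omega
  · lift m to ℕ using (by omega)
    obtain rfl : k = m + 4 := by omega
    rw [← card_natSimplex]
    refine card_nbij' (fun (a, b, c, d) => ![a.toNat, b.toNat, c.toNat, d.toNat])
      (fun f => (f 0, f 1, f 2, f 3)) ?_ ?_ ?_ ?_
    · rintro ⟨a, b, c, d⟩ h
      rw [mem_coe, mem_simplex4] at h
      simp only [mem_coe, mem_natSimplex, Fin.sum_univ_four, Matrix.cons_val]
      omega
    · intro f hf
      rw [mem_coe, mem_natSimplex, Fin.sum_univ_four] at hf
      rw [mem_coe, mem_simplex4]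
      omega
    · rintro ⟨a, b, c, d⟩ h
      rw [mem_coe, mem_simplex4] at h
      simp only [Matrix.cons_val, Prod.mk.injEq]
      omega
    · intro f _
      ext i
      fin_cases i <;> simp

noncomputable def birkhoffPoints (n : ℤ) : Finset (ℤ × ℤ × ℤ × ℤ) :=
  (Icc 0 n ×ˢ Icc 0 n ×ˢ Icc 0 n ×ˢ Icc 0 n).filter fun (x, y, z, w) =>
    x ≤ z + w ∧ z + w ≤ n ∧ z ≤ x + y ∧ x + y ≤ n ∧ y + w ≤ n

theorem mem_birkhoffPoints {n x y z w : ℤ} : (x, y, z, w) ∈ birkhoffPoints n ↔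
    0 ≤ x ∧ 0 ≤ y ∧ 0 ≤ z ∧ 0 ≤ w ∧ x ≤ z + w ∧ z + w ≤ n ∧ z ≤ x + y ∧ x + y ≤ n ∧
      y + w ≤ n := by
  simp only [birkhoffPoints, mem_filter, mem_product, mem_Icc]
  omega

theorem card_birkhoffPoints_eq_add (n : ℤ) : #(birkhoffPoints n) =
    #((birkhoffPoints n).filter fun (x, y, z, w) => x ≤ z ∧ x + y + w ≤ n) +
    #((birkhoffPoints n).filter fun (x, y, z, w) => z < x ∧ z + y + w ≤ n) +
    #((birkhoffPoints n).filter fun (x, y, z, w) => n < x + y + w ∧ n < z + y + w) :=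
  card_eq_card_filter_add_card_filter_add_card_filter (fun ⟨x, y, z, w⟩ _ => by omega)
    (fun ⟨x, y, z, w⟩ _ => by omega)

theorem card_filter_birkhoffPoints_x_le_z (n : ℤ) :
    #((birkhoffPoints n).filter fun (x, y, z, w) => x ≤ z ∧ x + y + w ≤ n) =
      #(simplex4 n) := by
  refine card_nbij' (fun (x, y, z, w) => (x, x + y - z, w, z - x))
    (fun (a, b, c, d) => (a, b + d, a + d, c)) ?_ ?_ ?_ ?_ <;>
  · rintro ⟨x, y, z, w⟩ h
    simp only [mem_coe, mem_filter, mem_birkhoffPoints, mem_simplex4, Prod.mk.injEq,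
      true_and, and_true] at h ⊢
    omega

theorem card_filter_birkhoffPoints_z_lt_x (n : ℤ) :
    #((birkhoffPoints n).filter fun (x, y, z, w) => z < x ∧ z + y + w ≤ n) =
      #(simplex4 (n - 1)) := by
  refine card_nbij' (fun (x, y, z, w) => (z, y, z + w - x, x - z - 1))
    (fun (a, b, c, d) => (a + d + 1, b, a, c + d + 1)) ?_ ?_ ?_ ?_ <;>
  · rintro ⟨x, y, z, w⟩ h
    simp only [mem_coe, mem_filter, mem_birkhoffPoints, mem_simplex4, Prod.mk.injEq,
      true_and] at h ⊢
    omega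

theorem card_filter_birkhoffPoints_lt_add (n : ℤ) :
    #((birkhoffPoints n).filter fun (x, y, z, w) => n < x + y + w ∧ n < z + y + w) =
      #(simplex4 (n - 2)) := by
  refine card_nbij' (fun (x, y, z, w) => (n - y - w, n - z - w, n - x - y, x + y + w - n - 1))
    (fun (a, b, c, d) => (a + d + 1, n - 1 - a - c - d, n - 1 - b - c - d, c + d + 1))
    ?_ ?_ ?_ ?_ <;>
  · rintro ⟨x, y, z, w⟩ h
    simp only [mem_coe, mem_filter, mem_birkhoffPoints, mem_simplex4, Prod.mk.injEq] at h ⊢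
    omega

theorem mem_smul_nabla {t x y z w : ℝ} (ht : 0 < t) :
    (x, y, z, w) ∈ t • nabla ↔ 0 ≤ x ∧ 0 ≤ y ∧ 0 ≤ z ∧ 0 ≤ w ∧
      x ≤ z + w ∧ z + w ≤ t ∧ z ≤ x + y ∧ x + y ≤ t ∧ y + w ≤ t := by
  have hti : 0 < t⁻¹ := inv_pos.2 ht
  simp only [Set.mem_smul_set_iff_inv_smul_mem₀ ht.ne', nabla, Set.mem_ofPred_eq, Prod.smul_mk,
    smul_eq_mul, ← mul_add, mul_nonneg_iff_of_pos_left hti, mul_le_mul_iff_right₀ hti,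
    inv_mul_le_one₀ ht]

theorem cast_choose_four (m : ℕ) :
    (m.choose 4 : ℚ) = m * (m - 1) * (m - 2) * (m - 3) / 24 := by
  rw [Nat.cast_choose_eq_descPochhammer_div]
  simp [descPochhammer_succ_right, Nat.factorial]

theorem stmt6 (n : ℕ) (hn : 0 < n) :
    {v : ℤ × ℤ × ℤ × ℤ | (((v.1 : ℝ), (v.2.1 : ℝ), (v.2.2.1 : ℝ), (v.2.2.2 : ℝ)) : ℝ × ℝ × ℝ × ℝ) ∈ (n : ℝ) • nabla}.ncard
        = Nat.choose (n + 4) 4 + Nat.choose (n + 3) 4 + Nat.choose (n + 2) 4 ∧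
      ((Nat.choose (n + 4) 4 + Nat.choose (n + 3) 4 + Nat.choose (n + 2) 4 : ℚ))
        = (3 * (n : ℚ) ^ 4 + 18 * (n : ℚ) ^ 3 + 45 * (n : ℚ) ^ 2 + 54 * (n : ℚ) ^ 1 + 24) / 24 := by
  have hpoints : {v : ℤ × ℤ × ℤ × ℤ | (((v.1 : ℝ), (v.2.1 : ℝ), (v.2.2.1 : ℝ), (v.2.2.2 : ℝ)) :
      ℝ × ℝ × ℝ × ℝ) ∈ (n : ℝ) • nabla} = birkhoffPoints n := by
    ext ⟨x, y, z, w⟩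
    simp only [Set.mem_ofPred_eq, mem_coe, mem_smul_nabla (Nat.cast_pos.2 hn), mem_birkhoffPoints]
    norm_cast
  refine ⟨?_, ?_⟩
  · rw [hpoints, Set.ncard_coe_finset, card_birkhoffPoints_eq_add,
      card_filter_birkhoffPoints_x_le_z, card_filter_birkhoffPoints_z_lt_x,
      card_filter_birkhoffPoints_lt_add, card_simplex4 (k := n + 4) (by omega),
      card_simplex4 (k := n + 3) (by omega), card_simplex4 (k := n + 2) (by omega)]
  · push_cast [cast_choose_four]
    ring
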